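/- Let S = ⟨qm₁,…,qm_d, pn₁,…,pn_k⟩ be a gluing of S₁ and S₂. Then: (1) for all x∈S₁ and y∈S₂, ord_S(qx+py) ≥ ord_{S₁}(x) + ord_{S₂}(y); (2) every u∈S can be written u = qz₁ + pz₂ with z₁∈S₁, z₂∈S₂ and ord_S(u) = ord_{S₁}(z₁) + ord_{S₂}(z₂). -/

import Mathlib

open scoped Pointwise

/-- `S ⊆ ℕ` is a numerical semigroup: it contains `0`, is closed under
addition, and has finite complement in `ℕ`. -/
def IsNumSgp (S : Set ℕ) : Prop :=
  (0 : ℕ) ∈ S ∧ (∀ a ∈ S, ∀ b ∈ S, a + b ∈ S) ∧ {x : ℕ | x ∉ S}.Finite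

/-- `nM S t` is the `t`-fold sumset of the maximal ideal `M = S \ {0}`,
with the convention `nM S 0 = S`. -/
def nM (S : Set ℕ) : ℕ → Set ℕ
  | 0 => S
  | t + 1 => (S \ {0}) + nM S t

/-- the order of `s` with respect to `S` : the largest `t` with `s ∈ tM`. -/
noncomputable def ordS (S : Set ℕ) (s : ℕ) : ℕ := sSup {t : ℕ | s ∈ nM S t}

/-- the multiplicity of `S` : its least nonzero element. -/
noncomputable def mult (S : Set ℕ) : ℕ := sInf {x : ℕ | x ∈ S ∧ x ≠ 0}

/-- the Apéry set of `S` with respect to `x` : elements `s ∈ S` with `s - x ∉ S`. -/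
def Ap (S : Set ℕ) (x : ℕ) : Set ℕ := {s : ℕ | s ∈ S ∧ ¬ ∃ t ∈ S, s = t + x}

/-- membership of an integer in (the image in `ℤ` of) `S`. -/
def zmem (S : Set ℕ) (z : ℤ) : Prop := ∃ t ∈ S, (t : ℤ) = z

/-- the Frobenius number of `S` : the largest integer not in `S`. -/
noncomputable def Frob (S : Set ℕ) : ℤ := sSup {z : ℤ | ¬ zmem S z}

/-- `S` is symmetric: for every integer `z`, `z ∈ S` iff `F(S) - z ∉ S`. -/
def IsSymmetric (S : Set ℕ) : Prop := ∀ z : ℤ, zmem S z ↔ ¬ zmem S (Frob S - z)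

/-- the set of maximal elements of `Ap S x` with respect to the order
`u ⪯ v` iff `v = u + z` for some `z ∈ S`. -/
def MaxAp (S : Set ℕ) (x : ℕ) : Set ℕ :=
  {w : ℕ | w ∈ Ap S x ∧ ∀ y ∈ Ap S x, (∃ z ∈ S, y = w + z) → y = w}

/-- the set of maximal elements of `Ap S x` with respect to the order
`u ⪯_M v` iff `v = u + z` for some `z ∈ S` with `ord(v) = ord(u) + ord(z)`. -/
def MaxMAp (S : Set ℕ) (x : ℕ) : Set ℕ :=
  {w : ℕ | w ∈ Ap S x ∧ ∀ y ∈ Ap S x,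
    (∃ z ∈ S, y = w + z ∧ ordS S y = ordS S w + ordS S z) → y = w}

/-- `S` is M-pure with respect to `x` : all maximal elements of `Ap S x`
under `⪯_M` have the same order. -/
def MPureWrt (S : Set ℕ) (x : ℕ) : Prop :=
  ∀ w ∈ MaxMAp S x, ∀ w' ∈ MaxMAp S x, ordS S w = ordS S w'

/-- `S` is M-pure : it is M-pure with respect to its multiplicity. -/
def MPure (S : Set ℕ) : Prop := MPureWrt S (mult S)

/-- `β_i(x)` : the number of elements of `Ap S x` of order `i`. -/
noncomputable def betaS (S : Set ℕ) (x i : ℕ) : ℕ := {w ∈ Ap S x | ordS S w = i}.ncard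

/-- `d(x)` : the maximal order of an element of `Ap S x`. -/
noncomputable def dS (S : Set ℕ) (x : ℕ) : ℕ := sSup (ordS S '' Ap S x)

/-- the reduction number of `S` : the least `r` with `(r+1)M = m(S) + rM`. -/
noncomputable def redNum (S : Set ℕ) : ℕ :=
  sInf {r : ℕ | nM S (r + 1) = (fun y => mult S + y) '' nM S r}

/-- `l_x(S) = max { ord(s+x) - ord(x) - ord(s) : s ∈ S, ord(s) ≤ r }`. -/
noncomputable def lS (S : Set ℕ) (x : ℕ) : ℕ :=
  sSup {t : ℕ | ∃ s ∈ S, ordS S s ≤ redNum S ∧ t = ordS S (s + x) - ordS S x - ordS S s}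

/-- the Hilbert function of `S`. -/
noncomputable def HilbS (S : Set ℕ) (t : ℕ) : ℕ := (nM S t \ nM S (t + 1)).ncard

/-- The data of a gluing `S = ⟨q m₁, …, q m_d, p n₁, …, p n_k⟩` of two numerical
semigroups `S₁ = ⟨m₁, …, m_d⟩` and `S₂ = ⟨n₁, …, n_k⟩`, minimally generated by
`m₁ < ⋯ < m_d` and `n₁ < ⋯ < n_k`, where `p ∈ S₁ \ {m₁, …, m_d}`,
`q ∈ S₂ \ {n₁, …, n_k}` and `gcd(p, q) = 1`. -/
structure Gluing where
  d : ℕ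
  k : ℕ
  hd : 0 < d
  hk : 0 < k
  m : Fin d → ℕ
  n : Fin k → ℕ
  p : ℕ
  q : ℕ
  hm : StrictMono m
  hn : StrictMono n
  hmin₁ : ∀ i, m i ∉ AddSubmonoid.closure (Set.range m \ {m i})
  hmin₂ : ∀ j, n j ∉ AddSubmonoid.closure (Set.range n \ {n j})
  hnum₁ : IsNumSgp (AddSubmonoid.closure (Set.range m) : Set ℕ)
  hnum₂ : IsNumSgp (AddSubmonoid.closure (Set.range n) : Set ℕ)
  hp : p ∈ AddSubmonoid.closure (Set.range m)
  hq : q ∈ AddSubmonoid.closure (Set.range n)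
  hpm : p ∉ Set.range m
  hqn : q ∉ Set.range n
  hpq : Nat.gcd p q = 1

/-- the numerical semigroup `S₁ = ⟨m₁, …, m_d⟩`. -/
def Gluing.S₁ (G : Gluing) : Set ℕ := (AddSubmonoid.closure (Set.range G.m) : Set ℕ)

/-- the numerical semigroup `S₂ = ⟨n₁, …, n_k⟩`. -/
def Gluing.S₂ (G : Gluing) : Set ℕ := (AddSubmonoid.closure (Set.range G.n) : Set ℕ)

/-- the glued numerical semigroup `S = ⟨q m₁, …, q m_d, p n₁, …, p n_k⟩`. -/
def Gluing.S (G : Gluing) : Set ℕ :=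
  (AddSubmonoid.closure
    ((fun x => G.q * x) '' Set.range G.m ∪ (fun x => G.p * x) '' Set.range G.n) : Set ℕ)

/-- the smallest generator `m₁` of `S₁`. -/
def Gluing.m₁ (G : Gluing) : ℕ := G.m ⟨0, G.hd⟩

/-- the smallest generator `n₁` of `S₂`. -/
def Gluing.n₁ (G : Gluing) : ℕ := G.n ⟨0, G.hk⟩

/-- the gluing is specific if `ord_{S₂}(q) + l_q(S₂) ≤ ord_{S₁}(p)`. -/
def Gluing.Specific (G : Gluing) : Prop := ordS G.S₂ G.q + lS G.S₂ G.q ≤ ordS G.S₁ G.p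

/-- the gluing is nice if `q = a n₁` for some `1 < a ≤ ord_{S₁}(p)`. -/
def Gluing.Nice (G : Gluing) : Prop := ∃ a : ℕ, 1 < a ∧ a ≤ ordS G.S₁ G.p ∧ G.q = a * G.n₁

/-
Since `S` is generated by the `q mᵢ` and `p nⱼ`, it is the sum `q • S₁ + p • S₂`. The order is
superadditive on any submonoid of `ℕ`, and multiplying by `q ≠ 0` sends sums of `t` nonzero
elements of `S₁` to sums of `t` nonzero elements of `S`, so `ord_{S₁}(x) ≤ ord_S(qx)`; this gives
(1). For (2), write `u ∈ S` as a sum of `ord_S(u)` nonzero elements of `S` and split each summand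
into its `S₁`- and `S₂`-parts: at least one part of each summand is nonzero, so collecting them
yields `u = q z₁ + p z₂` with `ord_S(u) ≤ ord_{S₁}(z₁) + ord_{S₂}(z₂)`; (1) gives the reverse.
-/

lemma le_of_mem_nM {S : Set ℕ} {s : ℕ} : ∀ {t : ℕ}, s ∈ nM S t → t ≤ s
  | 0, _ => Nat.zero_le s
  | t + 1, hs => by
    obtain ⟨g, ⟨-, hg0⟩, v, hv, rfl⟩ := Set.mem_add.mp hs
    have := le_of_mem_nM hv
    have : g ≠ 0 := hg0
    omega

lemma le_ordS_of_mem_nM {S : Set ℕ} {s t : ℕ} (h : s ∈ nM S t) : t ≤ ordS S s :=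
  le_csSup ⟨s, fun _ => le_of_mem_nM⟩ h

lemma mem_nM_ordS {S : Set ℕ} {s : ℕ} (hs : s ∈ S) : s ∈ nM S (ordS S s) :=
  Nat.sSup_mem (s := {t | s ∈ nM S t}) ⟨0, hs⟩ ⟨s, fun _ => le_of_mem_nM⟩

lemma add_mem_nM_succ {S : Set ℕ} {g v t : ℕ} (hg : g ∈ S) (hg0 : g ≠ 0) (hv : v ∈ nM S t) :
    g + v ∈ nM S (t + 1) :=
  Set.add_mem_add ⟨hg, hg0⟩ hv

section AddSubmonoid

variable {S T : AddSubmonoid ℕ}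

lemma add_mem_nM {x y : ℕ} (hx : x ∈ S) : ∀ {b : ℕ}, y ∈ nM S b → x + y ∈ nM S b
  | 0, hy => S.add_mem hx hy
  | b + 1, hy => by
    obtain ⟨g, hg, v, hv, rfl⟩ := Set.mem_add.mp hy
    rw [add_left_comm]
    exact Set.add_mem_add hg (add_mem_nM hx hv)

lemma add_mem_nM_add {x y b : ℕ} (hy : y ∈ nM S b) :
    ∀ {a : ℕ}, x ∈ nM S a → x + y ∈ nM S (a + b)
  | 0, hx => by simpa using add_mem_nM hx hy
  | a + 1, hx => by
    obtain ⟨g, hg, v, hv, rfl⟩ := Set.mem_add.mp hx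
    rw [add_right_comm a 1 b, add_assoc g]
    exact Set.add_mem_add hg (add_mem_nM_add hy hv)

lemma ordS_add_ordS_le_ordS_add {x y : ℕ} (hx : x ∈ S) (hy : y ∈ S) :
    ordS S x + ordS S y ≤ ordS S (x + y) :=
  le_ordS_of_mem_nM (add_mem_nM_add (mem_nM_ordS hy) (mem_nM_ordS hx))

lemma one_le_ordS {s : ℕ} (hs : s ∈ S) (hs0 : s ≠ 0) : 1 ≤ ordS S s :=
  le_ordS_of_mem_nM (by simpa using add_mem_nM_succ (t := 0) hs hs0 S.zero_mem)

lemma mul_mem_nM {q x : ℕ} (hq : q ≠ 0) (hST : ∀ y ∈ S, q * y ∈ T) :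
    ∀ {t : ℕ}, x ∈ nM S t → q * x ∈ nM T t
  | 0, hx => hST x hx
  | t + 1, hx => by
    obtain ⟨g, ⟨hg, hg0⟩, v, hv, rfl⟩ := Set.mem_add.mp hx
    rw [mul_add]
    exact add_mem_nM_succ (hST g hg) (mul_ne_zero hq hg0) (mul_mem_nM hq hST hv)

lemma ordS_le_ordS_mul {q x : ℕ} (hq : q ≠ 0) (hST : ∀ y ∈ S, q * y ∈ T) (hx : x ∈ S) :
    ordS S x ≤ ordS T (q * x) :=
  le_ordS_of_mem_nM (mul_mem_nM hq hST (mem_nM_ordS hx))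

end AddSubmonoid

def glue (S₁ S₂ : AddSubmonoid ℕ) (p q : ℕ) : AddSubmonoid ℕ :=
  S₁.map (AddMonoidHom.mulLeft q) ⊔ S₂.map (AddMonoidHom.mulLeft p)

section glue

variable {S₁ S₂ : AddSubmonoid ℕ} {p q : ℕ}

lemma mem_glue {u : ℕ} : u ∈ glue S₁ S₂ p q ↔ ∃ z₁ ∈ S₁, ∃ z₂ ∈ S₂, u = q * z₁ + p * z₂ := by
  simp only [glue, AddSubmonoid.mem_sup, AddSubmonoid.mem_map, AddMonoidHom.coe_mulLeft]
  constructor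
  · rintro ⟨_, ⟨z₁, hz₁, rfl⟩, _, ⟨z₂, hz₂, rfl⟩, rfl⟩
    exact ⟨z₁, hz₁, z₂, hz₂, rfl⟩
  · rintro ⟨z₁, hz₁, z₂, hz₂, rfl⟩
    exact ⟨_, ⟨z₁, hz₁, rfl⟩, _, ⟨z₂, hz₂, rfl⟩, rfl⟩

lemma mul_mem_glue_left {x : ℕ} (hx : x ∈ S₁) : q * x ∈ glue S₁ S₂ p q :=
  mem_glue.mpr ⟨x, hx, 0, S₂.zero_mem, by rw [mul_zero, add_zero]⟩

lemma mul_mem_glue_right {y : ℕ} (hy : y ∈ S₂) : p * y ∈ glue S₁ S₂ p q :=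
  mem_glue.mpr ⟨0, S₁.zero_mem, y, hy, by rw [mul_zero, zero_add]⟩

lemma ordS_add_ordS_le_ordS_glue (hp : p ≠ 0) (hq : q ≠ 0) {x y : ℕ} (hx : x ∈ S₁)
    (hy : y ∈ S₂) : ordS S₁ x + ordS S₂ y ≤ ordS (glue S₁ S₂ p q) (q * x + p * y) :=
  calc ordS S₁ x + ordS S₂ y
      ≤ ordS (glue S₁ S₂ p q) (q * x) + ordS (glue S₁ S₂ p q) (p * y) :=
        add_le_add (ordS_le_ordS_mul hq (fun _ => mul_mem_glue_left) hx)
          (ordS_le_ordS_mul hp (fun _ => mul_mem_glue_right) hy)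
    _ ≤ ordS (glue S₁ S₂ p q) (q * x + p * y) :=
        ordS_add_ordS_le_ordS_add (mul_mem_glue_left hx) (mul_mem_glue_right hy)

lemma exists_decomp_of_mem_nM_glue {u : ℕ} : ∀ {t : ℕ}, u ∈ nM (glue S₁ S₂ p q) t →
    ∃ z₁ ∈ S₁, ∃ z₂ ∈ S₂, u = q * z₁ + p * z₂ ∧ t ≤ ordS S₁ z₁ + ordS S₂ z₂
  | 0, hu => by
    obtain ⟨z₁, hz₁, z₂, hz₂, rfl⟩ := mem_glue.mp hu
    exact ⟨z₁, hz₁, z₂, hz₂, rfl, Nat.zero_le _⟩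
  | t + 1, hu => by
    obtain ⟨g, ⟨hg, hg0⟩, v, hv, rfl⟩ := Set.mem_add.mp hu
    obtain ⟨w₁, hw₁, w₂, hw₂, rfl⟩ := mem_glue.mp hg
    obtain ⟨z₁, hz₁, z₂, hz₂, rfl, ht⟩ := exists_decomp_of_mem_nM_glue hv
    have hw : 1 ≤ ordS S₁ w₁ + ordS S₂ w₂ := by
      by_cases hw₁0 : w₁ = 0
      · have hw₂0 : w₂ ≠ 0 := by rintro rfl; simp [hw₁0] at hg0
        exact le_add_left (one_le_ordS hw₂ hw₂0)
      · exact le_add_right (one_le_ordS hw₁ hw₁0)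
    refine ⟨w₁ + z₁, S₁.add_mem hw₁ hz₁, w₂ + z₂, S₂.add_mem hw₂ hz₂, by ring, ?_⟩
    have := ordS_add_ordS_le_ordS_add hw₁ hz₁
    have := ordS_add_ordS_le_ordS_add hw₂ hz₂
    omega

lemma exists_decomp_ordS_glue_eq (hp : p ≠ 0) (hq : q ≠ 0) {u : ℕ} (hu : u ∈ glue S₁ S₂ p q) :
    ∃ z₁ ∈ S₁, ∃ z₂ ∈ S₂,
      u = q * z₁ + p * z₂ ∧ ordS (glue S₁ S₂ p q) u = ordS S₁ z₁ + ordS S₂ z₂ := by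
  obtain ⟨z₁, hz₁, z₂, hz₂, rfl, hle⟩ := exists_decomp_of_mem_nM_glue (mem_nM_ordS hu)
  exact ⟨z₁, hz₁, z₂, hz₂, rfl, hle.antisymm (ordS_add_ordS_le_ordS_glue hp hq hz₁ hz₂)⟩

end glue

lemma ne_one_of_mem_closure_of_notMem {A : Set ℕ} {x : ℕ} (hx : x ∈ AddSubmonoid.closure A)
    (hxA : x ∉ A) : x ≠ 1 := by
  suffices h : ∀ y ∈ AddSubmonoid.closure A, y = 1 → y ∈ A from fun hx1 => hxA (h x hx hx1)
  intro y hy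
  induction hy using AddSubmonoid.closure_induction with
  | mem y hy => exact fun _ => hy
  | zero => exact fun h => absurd h zero_ne_one
  | add a b _ _ ha hb =>
    intro h
    rcases Nat.add_eq_one_iff.mp h with ⟨rfl, rfl⟩ | ⟨rfl, rfl⟩
    · simpa using hb rfl
    · simpa using ha rfl

namespace Gluing

variable (G : Gluing)

lemma p_ne_zero : G.p ≠ 0 := by
  intro hp
  have hq : G.q = 1 := by simpa [hp] using G.hpq
  exact ne_one_of_mem_closure_of_notMem G.hq G.hqn hq

lemma q_ne_zero : G.q ≠ 0 := by
  intro hq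
  have hp : G.p = 1 := by simpa [hq] using G.hpq
  exact ne_one_of_mem_closure_of_notMem G.hp G.hpm hp

lemma S_eq_glue : G.S = glue (AddSubmonoid.closure (Set.range G.m))
    (AddSubmonoid.closure (Set.range G.n)) G.p G.q := by
  rw [S, AddSubmonoid.closure_union, glue, AddMonoidHom.map_mclosure, AddMonoidHom.map_mclosure]
  rfl

end Gluing

/-- for a gluing `S` of `S₁` and `S₂`:
(1) `ord_S(qx + py) ≥ ord_{S₁}(x) + ord_{S₂}(y)` for all `x ∈ S₁`, `y ∈ S₂`;
(2) every `u ∈ S` can be written `u = qz₁ + pz₂` with `z₁ ∈ S₁`, `z₂ ∈ S₂` and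
`ord_S(u) = ord_{S₁}(z₁) + ord_{S₂}(z₂)`. -/
theorem stmt6 (G : Gluing) :
    (∀ x ∈ G.S₁, ∀ y ∈ G.S₂,
      ordS G.S₁ x + ordS G.S₂ y ≤ ordS G.S (G.q * x + G.p * y)) ∧
    (∀ u ∈ G.S, ∃ z₁ ∈ G.S₁, ∃ z₂ ∈ G.S₂,
      u = G.q * z₁ + G.p * z₂ ∧ ordS G.S u = ordS G.S₁ z₁ + ordS G.S₂ z₂) := by
  rw [G.S_eq_glue]
  exact ⟨fun x hx y hy => ordS_add_ordS_le_ordS_glue G.p_ne_zero G.q_ne_zero hx hy,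
    fun u hu => exists_decomp_ordS_glue_eq G.p_ne_zero G.q_ne_zero hu⟩
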